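/- Let k ≥ 1 be an integer. Then the alternating sum of type-B Eulerian numbers Σ_{ℓ=0}^{k} (−1)^ℓ · ⟨B_k, ℓ⟩ equals 0 if k is odd, and equals (−1)^{k/2} · 2^k · E_k if k is even. -/

import Mathlib

/-- Extension of `w : Fin k → ℤ` to `ℕ` with a leading zero: `wext w 0 = 0` and
`wext w j = w (j-1)` for `1 ≤ j ≤ k` (and `0` beyond). -/
def wext {k : ℕ} (w : Fin k → ℤ) : ℕ → ℤ := fun j =>
  if h : j - 1 < k ∧ 1 ≤ j then w ⟨j - 1, h.1⟩ else 0

/-- `w : Fin k → ℤ` is a signed permutation of length `k`: `w z = s z · σ z` for a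
permutation `σ` of `{1, …, k}` and signs `s z ∈ {−1, 1}`. -/
def IsSignedPerm {k : ℕ} (w : Fin k → ℤ) : Prop :=
  ∃ σ : Equiv.Perm (Fin k),
    ∀ z, w z = ((σ z : ℕ) : ℤ) + 1 ∨ w z = -(((σ z : ℕ) : ℤ) + 1)

/-- The number of descents of a signed permutation, with a leading zero: the number of
indices `z ∈ {0, …, k-1}` with `w z > w (z+1)` where `w 0 = 0` (1-indexed). -/
noncomputable def signedDescentCount {k : ℕ} (w : Fin k → ℤ) : ℕ :=
  Nat.card {z : ℕ // z < k ∧ wext w (z + 1) < wext w z}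

/-- The type-B Eulerian number `⟨B_k, ℓ⟩`: the number of signed permutations of length
`k` with exactly `ℓ` descents. -/
noncomputable def eulerianBNum (k ℓ : ℕ) : ℕ :=
  Nat.card {w : Fin k → ℤ // IsSignedPerm w ∧ signedDescentCount w = ℓ}

/-- The Euler zigzag number `E n`: the number of alternating permutations of
`{0, …, n-1}`, i.e. permutations `σ` with `σ 0 < σ 1 > σ 2 < σ 3 > ⋯`. -/
noncomputable def zigzagNum (n : ℕ) : ℕ :=
  Nat.card {σ : Equiv.Perm (Fin n) //
    ∀ z : ℕ, ∀ h : z + 1 < n,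
      if z % 2 = 0 then σ ⟨z, Nat.lt_of_succ_lt h⟩ < σ ⟨z + 1, h⟩
      else σ ⟨z + 1, h⟩ < σ ⟨z, Nat.lt_of_succ_lt h⟩}

/-!
Write a signed permutation as `w i = s i · |w i|` and put `w 0 = 0`. If `|w i| < |w (i+1)|`, step
`i` is a descent iff `s (i+1) = -1`; otherwise it is a descent iff `s i = 1`. Hence, for fixed
absolute values, `(-1)^des w` is `±` a monomial in the signs, in which `s j` has exponent
`[step j-1 ascends in |w|] + [step j descends in |w|]`. Summed over all signs the monomial
vanishes unless every exponent is even, i.e. unless `0, |w 1|, …, |w k|, +∞` alternates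
up, down, up, …; this forces `k` even and `|w|` to be down-up, and the surviving sign sums
contribute `(-2)^(k/2) · 2^(k/2)`.
-/

open Finset

namespace TypeBEulerian

section Wext

variable {k : ℕ}

lemma wext_zero (w : Fin k → ℤ) : wext w 0 = 0 := by
  simp [wext]

lemma wext_succ_of_lt (w : Fin k → ℤ) {i : ℕ} (hi : i < k) : wext w (i + 1) = w ⟨i, hi⟩ := by
  simp [wext, hi]

lemma wext_comp (w : Fin k → ℤ) {f : ℤ → ℤ} (hf : f 0 = 0) (i : ℕ) :
    wext (f ∘ w) i = f (wext w i) := by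
  unfold wext
  split_ifs <;> simp [hf]

end Wext

def stepSign (x y : ℤ) : ℤ := if y < x then -1 else 1

lemma stepSign_of_abs_lt {x y : ℤ} (h : |x| < |y|) : stepSign x y = y.sign := by
  rcases lt_trichotomy y 0 with hy | rfl | hy
  · rw [abs_of_neg hy] at h
    rw [stepSign, if_pos (by linarith [neg_abs_le x]), Int.sign_eq_neg_one_of_neg hy]
  · exact absurd h (by simp)
  · rw [abs_of_pos hy] at h
    rw [stepSign, if_neg (by linarith [le_abs_self x]), Int.sign_eq_one_of_pos hy]

lemma stepSign_of_abs_gt {x y : ℤ} (h : |y| < |x|) : stepSign x y = -x.sign := by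
  rcases lt_trichotomy x 0 with hx | rfl | hx
  · rw [abs_of_neg hx] at h
    rw [stepSign, if_neg (by linarith [neg_abs_le y]), Int.sign_eq_neg_one_of_neg hx, neg_neg]
  · exact absurd h (by simp)
  · rw [abs_of_pos hx] at h
    rw [stepSign, if_pos (by linarith [le_abs_self y]), Int.sign_eq_one_of_pos hx]

section DescentCount

variable {k : ℕ}

lemma signedDescentCount_eq_card (w : Fin k → ℤ) :
    signedDescentCount w = #{z ∈ range k | wext w (z + 1) < wext w z} := by
  rw [signedDescentCount, ← Nat.card_eq_finsetCard]
  exact Nat.card_congr (Equiv.subtypeEquivRight fun z => by simp)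

lemma signedDescentCount_le (w : Fin k → ℤ) : signedDescentCount w ≤ k := by
  rw [signedDescentCount_eq_card]
  exact (card_filter_le _ _).trans (card_range k).le

lemma neg_one_pow_signedDescentCount (w : Fin k → ℤ) :
    (-1 : ℤ) ^ signedDescentCount w = ∏ i ∈ range k, stepSign (wext w i) (wext w (i + 1)) := by
  simp only [signedDescentCount_eq_card, stepSign, prod_ite, prod_const, one_pow, mul_one]

lemma neg_one_pow_signedDescentCount_eq_prod_sign (w : Fin k → ℤ)
    (hw : ∀ i < k, |wext w i| ≠ |wext w (i + 1)|) :
    (-1 : ℤ) ^ signedDescentCount w = ∏ i ∈ range k,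
      if |wext w i| < |wext w (i + 1)| then (wext w (i + 1)).sign else -(wext w i).sign := by
  rw [neg_one_pow_signedDescentCount]
  refine prod_congr rfl fun i hi => ?_
  split_ifs with h
  · exact stepSign_of_abs_lt h
  · exact stepSign_of_abs_gt (lt_of_le_of_ne (not_lt.1 h) (hw i (mem_range.1 hi)).symm)

end DescentCount

/-- The factor of the descent sign carried by the sign `t` at one position: `p` says that the step
into the position is an ascent, `q` that the step out of it is not a descent. -/
def positionWeight (p q : Bool) (t : ℤ) : ℤ := (if p then t else 1) * (if q then 1 else -t)

lemma sum_units_positionWeight (p q : Bool) :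
    ∑ t : ℤˣ, positionWeight p q t = if p = q then 0 else if p then -2 else 2 := by
  rw [UnitsInt.univ, sum_pair (by decide)]
  cases p <;> cases q <;> norm_num [positionWeight]

lemma prod_ite_eq_prod_positionWeight {k : ℕ} (b : ℕ → Bool) (hb0 : b 0 = true)
    (hbk : b k = true) (S : ℕ → ℤ) :
    ∏ i ∈ range k, (if b i then S (i + 1) else -S i) =
      ∏ j ∈ range k, positionWeight (b j) (b (j + 1)) (S (j + 1)) := by
  have hsplit (i : ℕ) : (if b i then S (i + 1) else -S i) =
      (if b i then S (i + 1) else 1) * (if b i then 1 else -S i) := by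
    cases b i <;> simp
  have hshift : ∏ i ∈ range k, (if b i then (1 : ℤ) else -S i) =
      ∏ j ∈ range k, (if b (j + 1) then 1 else -S (j + 1)) := by
    cases k with
    | zero => simp
    | succ m => rw [prod_range_succ', prod_range_succ, hb0, hbk]; simp
  simp only [hsplit, prod_mul_distrib, hshift, positionWeight]

lemma sum_prod_ite_eq_prod_sum_positionWeight {k : ℕ} (b : ℕ → Bool) (hb0 : b 0 = true)
    (hbk : b k = true) :
    ∑ s : Fin k → ℤˣ, ∏ i ∈ range k,
        (if b i then wext (fun z => (s z : ℤ)) (i + 1) else -wext (fun z => (s z : ℤ)) i) =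
      ∏ j ∈ range k, ∑ t : ℤˣ, positionWeight (b j) (b (j + 1)) t := by
  rw [← Fin.prod_univ_eq_prod_range (fun j => ∑ t : ℤˣ, positionWeight (b j) (b (j + 1)) t),
    Fintype.prod_sum]
  refine sum_congr rfl fun s _ => ?_
  rw [prod_ite_eq_prod_positionWeight b hb0 hbk, ← Fin.prod_univ_eq_prod_range]
  exact prod_congr rfl fun j _ => by rw [wext_succ_of_lt _ j.isLt]

lemma prod_sum_positionWeight (b : ℕ → Bool) (hb0 : b 0 = true) (k : ℕ) :
    ∏ j ∈ range k, ∑ t : ℤˣ, positionWeight (b j) (b (j + 1)) t =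
      if ∀ j ≤ k, b j = decide (Even j) then (-1) ^ ((k + 1) / 2) * 2 ^ k else 0 := by
  induction k with
  | zero => simp [hb0]
  | succ k ih =>
    rw [prod_range_succ, ih, sum_units_positionWeight]
    by_cases h : ∀ j ≤ k, b j = decide (Even j)
    · have hsucc : (∀ j ≤ k + 1, b j = decide (Even j)) ↔ b (k + 1) = decide (Even (k + 1)) :=
        ⟨fun h' => h' _ le_rfl, fun h' j hj => (Nat.le_succ_iff.1 hj).elim (h j) (· ▸ h')⟩
      rw [if_pos h, if_congr hsucc rfl rfl, h k le_rfl]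
      rcases Nat.even_or_odd' k with ⟨m, rfl | rfl⟩ <;> cases b (_ + 1) <;>
        simp [parity_simps, pow_succ, show (2 * m + 1) / 2 = m by omega,
          show (2 * m + 2) / 2 = m + 1 by omega, show (2 * m + 3) / 2 = m + 1 by omega] <;> ring
    · rw [if_neg h, zero_mul, if_neg fun h' => h fun j hj => h' j (by omega)]

section SignedPerm

variable {k : ℕ}

/-- Using `k - σ z` rather than `σ z + 1` makes the ascents of `σ` the descents of `|w|`. -/
def signedPermOf (σ : Equiv.Perm (Fin k)) (s : Fin k → ℤˣ) (z : Fin k) : ℤ :=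
  s z * ((k : ℤ) - σ z)

lemma sub_val_pos (x : Fin k) : 0 < (k : ℤ) - x := by
  have := x.isLt
  omega

lemma abs_signedPermOf (σ : Equiv.Perm (Fin k)) (s : Fin k → ℤˣ) (z : Fin k) :
    |signedPermOf σ s z| = k - σ z := by
  rw [signedPermOf, abs_mul, Int.isUnit_iff_abs_eq.1 (s z).isUnit, one_mul,
    abs_of_pos (sub_val_pos (σ z))]

lemma sign_signedPermOf (σ : Equiv.Perm (Fin k)) (s : Fin k → ℤˣ) (z : Fin k) :
    (signedPermOf σ s z).sign = s z := by
  rcases Int.units_eq_one_or (s z) with h | h <;>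
    simp [signedPermOf, h, Int.sign_eq_one_of_pos (sub_val_pos (σ z))]

lemma isSignedPerm_signedPermOf (σ : Equiv.Perm (Fin k)) (s : Fin k → ℤˣ) :
    IsSignedPerm (signedPermOf σ s) := by
  refine ⟨σ.trans Fin.revPerm, fun z => ?_⟩
  have := (σ z).isLt
  rcases Int.units_eq_one_or (s z) with h | h <;> simp [signedPermOf, h, Fin.val_rev] <;> omega

noncomputable def signedPermEquiv (k : ℕ) :
    Equiv.Perm (Fin k) × (Fin k → ℤˣ) ≃ {w : Fin k → ℤ // IsSignedPerm w} :=
  Equiv.ofBijective (fun p => ⟨signedPermOf p.1 p.2, isSignedPerm_signedPermOf p.1 p.2⟩) <| by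
    constructor
    · rintro ⟨σ, s⟩ ⟨σ', s'⟩ h
      have hw (z : Fin k) : signedPermOf σ s z = signedPermOf σ' s' z :=
        congrFun (congrArg Subtype.val h) z
      have hσ : σ = σ' := Equiv.ext fun z => by
        have := abs_signedPermOf σ s z
        rw [hw, abs_signedPermOf] at this
        exact Fin.ext (by omega)
      have hs : s = s' := funext fun z => Units.ext <| by
        rw [← sign_signedPermOf σ s, ← sign_signedPermOf σ' s', hw]
      rw [hσ, hs]
    · rintro ⟨w, τ, hτ⟩
      refine ⟨(τ.trans Fin.revPerm, fun z => if 0 < w z then 1 else -1),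
        Subtype.ext (funext fun z => ?_)⟩
      have := (τ z).isLt
      have := hτ z
      by_cases hpos : 0 < w z <;> simp [signedPermOf, hpos, Fin.val_rev] <;> omega

open Classical in
lemma eulerianBNum_eq_card (ℓ : ℕ) :
    eulerianBNum k ℓ = #{p : Equiv.Perm (Fin k) × (Fin k → ℤˣ) |
      signedDescentCount (signedPermOf p.1 p.2) = ℓ} := by
  rw [← Fintype.card_subtype, ← Nat.card_eq_fintype_card, eulerianBNum]
  exact Nat.card_congr <| (Equiv.subtypeSubtypeEquivSubtypeInter IsSignedPerm _).symm.trans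
    (Equiv.subtypeEquiv (signedPermEquiv k) fun _ => Iff.rfl).symm

lemma sum_mul_eulerianBNum (f : ℕ → ℤ) :
    ∑ ℓ ∈ range (k + 1), f ℓ * eulerianBNum k ℓ =
      ∑ p : Equiv.Perm (Fin k) × (Fin k → ℤˣ), f (signedDescentCount (signedPermOf p.1 p.2)) := by
  classical
  rw [← sum_fiberwise_of_maps_to (s := univ) (t := range (k + 1))
    (g := fun p => signedDescentCount (signedPermOf p.1 p.2))
    fun p _ => mem_range.2 (Nat.lt_succ_of_le (signedDescentCount_le _))]
  refine sum_congr rfl fun ℓ _ => ?_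
  rw [eulerianBNum_eq_card, sum_congr rfl fun p hp => by rw [(mem_filter.1 hp).2], sum_const,
    nsmul_eq_mul, mul_comm]

end SignedPerm

section Alternating

variable {k : ℕ}

def absSeq (σ : Equiv.Perm (Fin k)) : ℕ → ℤ := wext fun z => (k : ℤ) - σ z

/-- Ascents of `absSeq σ`, read as continued by `+∞` after position `k`. -/
def absAscent (σ : Equiv.Perm (Fin k)) (i : ℕ) : Bool :=
  decide (i < k → absSeq σ i < absSeq σ (i + 1))

def IsAlternating (σ : Equiv.Perm (Fin k)) : Prop :=
  ∀ z : ℕ, ∀ h : z + 1 < k,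
    if z % 2 = 0 then σ ⟨z, Nat.lt_of_succ_lt h⟩ < σ ⟨z + 1, h⟩
    else σ ⟨z + 1, h⟩ < σ ⟨z, Nat.lt_of_succ_lt h⟩

open Classical in
lemma zigzagNum_eq_card (n : ℕ) : zigzagNum n = #{σ : Equiv.Perm (Fin n) | IsAlternating σ} := by
  rw [zigzagNum, Nat.card_eq_fintype_card, Fintype.card_subtype]
  rfl

lemma absAscent_zero (σ : Equiv.Perm (Fin k)) : absAscent σ 0 = true := by
  simp only [absAscent, decide_eq_true_eq]
  intro hk
  rw [absSeq, wext_zero, wext_succ_of_lt _ hk]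
  exact sub_val_pos _

lemma absAscent_self (σ : Equiv.Perm (Fin k)) : absAscent σ k = true := by
  simp [absAscent]

lemma absAscent_succ (σ : Equiv.Perm (Fin k)) {j : ℕ} (hj : j + 1 < k) :
    absAscent σ (j + 1) = decide (σ ⟨j + 1, hj⟩ < σ ⟨j, by omega⟩) := by
  simp only [absAscent, absSeq, wext_succ_of_lt _ hj, wext_succ_of_lt _ (Nat.lt_of_succ_lt hj), hj,
    forall_const, decide_eq_decide, Fin.lt_def]
  omega

lemma absSeq_ne_succ (σ : Equiv.Perm (Fin k)) {i : ℕ} (hi : i < k) :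
    absSeq σ i ≠ absSeq σ (i + 1) := by
  rcases i with _ | j
  · rw [absSeq, wext_zero, wext_succ_of_lt _ hi]
    exact (sub_val_pos _).ne
  · rw [absSeq, wext_succ_of_lt _ hi, wext_succ_of_lt _ (Nat.lt_of_succ_lt hi)]
    intro h
    have := σ.injective (Fin.ext (by omega) : σ ⟨j, Nat.lt_of_succ_lt hi⟩ = σ ⟨j + 1, hi⟩)
    simp at this

lemma forall_absAscent_iff (σ : Equiv.Perm (Fin k)) :
    (∀ j ≤ k, absAscent σ j = decide (Even j)) ↔ Even k ∧ IsAlternating σ := by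
  constructor
  · intro h
    refine ⟨by simpa [absAscent_self] using (h k le_rfl).symm, fun z hz => ?_⟩
    have hz' := h (z + 1) hz.le
    rw [absAscent_succ σ hz, decide_eq_decide, Nat.even_add_one, Nat.even_iff] at hz'
    have hne : σ ⟨z, Nat.lt_of_succ_lt hz⟩ ≠ σ ⟨z + 1, hz⟩ := σ.injective.ne (by simp)
    split_ifs with hz2
    · exact lt_of_le_of_ne (not_lt.1 fun hlt => hz'.1 hlt hz2) hne
    · exact hz'.2 hz2
  · rintro ⟨hk, halt⟩ j hj
    rcases j with _ | z
    · simp [absAscent_zero]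
    rcases hj.lt_or_eq with hj | rfl
    · have hz := halt z hj
      rw [absAscent_succ σ hj, decide_eq_decide, Nat.even_add_one, Nat.even_iff]
      split_ifs at hz with hz2
      · exact ⟨fun h => absurd hz (lt_asymm h), fun h => absurd hz2 h⟩
      · exact ⟨fun _ => hz2, fun _ => hz⟩
    · simp [absAscent_self, hk]

lemma neg_one_pow_signedDescentCount_signedPermOf (σ : Equiv.Perm (Fin k)) (s : Fin k → ℤˣ) :
    (-1 : ℤ) ^ signedDescentCount (signedPermOf σ s) = ∏ i ∈ range k,
      if absAscent σ i then wext (fun z => (s z : ℤ)) (i + 1)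
      else -wext (fun z => (s z : ℤ)) i := by
  have habs (j : ℕ) : |wext (signedPermOf σ s) j| = absSeq σ j := by
    rw [← wext_comp _ abs_zero]
    exact congrArg (wext · j) (funext (abs_signedPermOf σ s))
  have hsign (j : ℕ) : (wext (signedPermOf σ s) j).sign = wext (fun z => (s z : ℤ)) j := by
    rw [← wext_comp _ Int.sign_zero]
    exact congrArg (wext · j) (funext (sign_signedPermOf σ s))
  rw [neg_one_pow_signedDescentCount_eq_prod_sign _ fun i hi => by
    simpa only [habs] using absSeq_ne_succ σ hi]
  refine prod_congr rfl fun i hi => ?_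
  simp only [habs, hsign, absAscent, mem_range.1 hi, forall_const, decide_eq_true_eq]

open Classical in
lemma sum_neg_one_pow_signedDescentCount_signedPermOf (σ : Equiv.Perm (Fin k)) :
    ∑ s : Fin k → ℤˣ, (-1 : ℤ) ^ signedDescentCount (signedPermOf σ s) =
      if Even k ∧ IsAlternating σ then (-1) ^ (k / 2) * 2 ^ k else 0 := by
  simp only [neg_one_pow_signedDescentCount_signedPermOf]
  rw [sum_prod_ite_eq_prod_sum_positionWeight _ (absAscent_zero σ) (absAscent_self σ),
    prod_sum_positionWeight _ (absAscent_zero σ), if_congr (forall_absAscent_iff σ) rfl rfl]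
  split_ifs with h
  · obtain ⟨m, rfl⟩ := h.1
    rw [show (m + m + 1) / 2 = (m + m) / 2 by omega]
  · rfl

end Alternating

end TypeBEulerian

open TypeBEulerian in
theorem stmt17_general (k : ℕ) :
    ∑ ℓ ∈ Finset.range (k + 1), (-1 : ℤ) ^ ℓ * (eulerianBNum k ℓ : ℤ) =
    if Odd k then 0 else (-1 : ℤ) ^ (k / 2) * 2 ^ k * (zigzagNum k : ℤ) := by
  classical
  rw [sum_mul_eulerianBNum, Fintype.sum_prod_type]
  simp only [sum_neg_one_pow_signedDescentCount_signedPermOf]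
  rcases Nat.even_or_odd k with hk | hk
  · rw [if_neg (Nat.not_odd_iff_even.2 hk), zigzagNum_eq_card]
    simp [hk, sum_ite, mul_comm]
  · simp [Nat.not_even_iff_odd.2 hk]

/-- `Σ_{ℓ=0}^{k} (−1)^ℓ · ⟨B_k, ℓ⟩` equals `0` for odd `k` and
`(−1)^(k/2) · 2^k · E_k` for even `k`. -/
theorem stmt17 (k : ℕ) (hk : 1 ≤ k) :
    ∑ ℓ ∈ Finset.range (k + 1), (-1 : ℤ) ^ ℓ * (eulerianBNum k ℓ : ℤ) =
    if Odd k then 0 else (-1 : ℤ) ^ (k / 2) * 2 ^ k * (zigzagNum k : ℤ) :=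
  stmt17_general k
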